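/- Let {E_{ij}}_{1≤i,j≤n} be operators on the unprimed factors lying in span_ℂ{V_σ : σ ∈ S_p} and satisfying the matrix-unit law E_{ij}E_{kl} = δ_{jk}E_{il}, and let {F_{kl}}_{1≤k,l≤m} be operators on the primed factors lying in span_ℂ{V'_τ : τ ∈ S_p} and satisfying F_{ij}F_{kl} = δ_{jk}F_{il}. Then for all indices, Tr( (d·P+_{p,p'}) E_{ij} F_{kl} ) = δ_{ij} δ_{kl} (1/d) Tr(E_{jj}) Tr(F_{ll}). In particular, for irreducible matrix units E^μ_{ij}, E^ν_{kl} of ℂ[S_p] with multiplicities m_μ = Tr(E^μ_{jj}), m_ν = Tr(E^ν_{ll}) in (ℂ^d)^{⊗p}, the trace equals δ_{ij} δ_{kl} m_μ m_ν / d. -/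

import Mathlib

open Matrix Kronecker

namespace WBA

/-- Configurations of `p` qudits of local dimension `d`. -/
abbrev Conf (d p : ℕ) := Fin p → Fin d

/-- Operators on `H = (ℂ^d)^{⊗ 2p}`, indexed by pairs (unprimed configuration, primed
configuration). -/
abbrev Op (d p : ℕ) := Matrix (Conf d p × Conf d p) (Conf d p × Conf d p) ℂ

/-- The projector `P⁺_{a,c'}` onto the maximally entangled state between unprimed system `a`
and primed system `c`, tensored with the identity elsewhere. -/
noncomputable def Pplus (d p : ℕ) (a c : Fin p) : Op d p :=
  Matrix.of fun xy uv =>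
    if xy.1 a = xy.2 c ∧ uv.1 a = uv.2 c ∧ (∀ j, j ≠ a → xy.1 j = uv.1 j) ∧
        (∀ j, j ≠ c → xy.2 j = uv.2 j) then
      (d : ℂ)⁻¹
    else 0

/-- `d • P⁺_{a,c'}`, i.e. the partially transposed swap `V^{t_{c'}}_{(a,c')}`. -/
noncomputable def arc (d p : ℕ) (a c : Fin p) : Op d p := (d : ℂ) • Pplus d p a c

/-- `V^(k) = ∏_{j=p-k+1}^{p} (d • P⁺_{j,j'})` (product over the last `k` systems;
`V^(0) = 1`). -/
noncomputable def Vop (d p k : ℕ) : Op d p :=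
  (((List.range p).filter (fun j => decide (p - k ≤ j))).map
    (fun j => if h : j < p then arc d p ⟨j, h⟩ ⟨j, h⟩ else 1)).prod

/-- `Q^(p) = d^{-p} V^(p)` and `Q^(k) = d^{-k} V^(k) - d^{-(k+1)} V^(k+1)` for `k < p`. -/
noncomputable def Qop (d p k : ℕ) : Op d p :=
  if k = p then ((d : ℂ) ^ p)⁻¹ • Vop d p p
  else ((d : ℂ) ^ k)⁻¹ • Vop d p k - ((d : ℂ) ^ (k + 1))⁻¹ • Vop d p (k + 1)

/-- Permutation matrix on `(ℂ^d)^{⊗ n}`: sends `e_v` to `e_{v ∘ σ⁻¹}`. -/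
noncomputable def permMat (d n : ℕ) (σ : Equiv.Perm (Fin n)) :
    Matrix (Fin n → Fin d) (Fin n → Fin d) ℂ :=
  Matrix.of fun x u => if x = u ∘ ⇑σ⁻¹ then 1 else 0

/-- `V_σ`: permutation of the unprimed factors, identity on the primed factors. -/
noncomputable def VL (d p : ℕ) (σ : Equiv.Perm (Fin p)) : Op d p :=
  (permMat d p σ) ⊗ₖ (1 : Matrix (Conf d p) (Conf d p) ℂ)

/-- `V'_τ`: permutation of the primed factors, identity on the unprimed factors. -/
noncomputable def VR (d p : ℕ) (τ : Equiv.Perm (Fin p)) : Op d p :=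
  (1 : Matrix (Conf d p) (Conf d p) ℂ) ⊗ₖ (permMat d p τ)

/-- Identification of `H` with `(ℂ^d)^{⊗ (p+p)}`. -/
def glue (d p : ℕ) : (Conf d p × Conf d p) ≃ (Fin (p + p) → Fin d) :=
  (Equiv.sumArrowEquivProdArrow (Fin p) (Fin p) (Fin d)).symm.trans
    (Equiv.arrowCongr finSumFinEquiv (Equiv.refl (Fin d)))

/-- The permutation operator `W_π`, `π ∈ S_{2p}`, permuting all `2p` tensor factors of `H`. -/
noncomputable def Wfull (d p : ℕ) (π : Equiv.Perm (Fin (p + p))) : Op d p :=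
  (permMat d (p + p) π).submatrix (glue d p) (glue d p)

/-- Partial transpose over the `p` primed factors:
`⟨x,y|M^Γ|u,v⟩ = ⟨x,v|M|u,y⟩`. -/
noncomputable def ptrans (d p : ℕ) (M : Op d p) : Op d p :=
  Matrix.of fun xy uv => M (xy.1, uv.2) (uv.1, xy.2)

/-- The algebra `A^d_{p,p}` of partially transposed permutation operators, as a
linear subspace of `End(H)`. -/
noncomputable def Apt (d p : ℕ) : Submodule ℂ (Op d p) :=
  Submodule.span ℂ {M | ∃ π : Equiv.Perm (Fin (p + p)), M = ptrans d p (Wfull d p π)}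

/-- Extension of an operator on systems `1,…,p-r,1',…,(p-r)'` by the identity on the
remaining systems. -/
noncomputable def embed (d p r : ℕ) (M : Op d (p - r)) : Op d p :=
  Matrix.of fun xy uv =>
    M (xy.1 ∘ Fin.castLE (Nat.sub_le p r), xy.2 ∘ Fin.castLE (Nat.sub_le p r))
      (uv.1 ∘ Fin.castLE (Nat.sub_le p r), uv.2 ∘ Fin.castLE (Nat.sub_le p r)) *
    (if ∀ j : Fin p, p - r ≤ (j : ℕ) → xy.1 j = uv.1 j ∧ xy.2 j = uv.2 j then 1 else 0)

/-- The ideal `M̃^(k) = span{ V_σ V'_τ Q^(k) V_π V'_ρ }` of `A^d_{p,p}`. -/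
noncomputable def Mtil (d p k : ℕ) : Submodule ℂ (Op d p) :=
  Submodule.span ℂ {M | ∃ σ τ π ρ : Equiv.Perm (Fin p),
    M = VL d p σ * VR d p τ * Qop d p k * (VL d p π * VR d p ρ)}

/-- Labels for the two irreps of `S_2`: symmetric `S` and antisymmetric `A`. -/
inductive SA
  | S
  | A
deriving DecidableEq

instance : Fintype SA := ⟨{SA.S, SA.A}, fun x => by cases x <;> simp⟩

/-- The swap operator on `ℂ^d ⊗ ℂ^d`. -/
noncomputable def Fsw (d : ℕ) : Matrix (Conf d 2) (Conf d 2) ℂ :=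
  Matrix.of fun x u => if x 0 = u 1 ∧ x 1 = u 0 then 1 else 0

/-- Symmetric and antisymmetric projectors on `ℂ^d ⊗ ℂ^d`. -/
noncomputable def Esm (d : ℕ) : SA → Matrix (Conf d 2) (Conf d 2) ℂ
  | SA.S => (2 : ℂ)⁻¹ • (1 + Fsw d)
  | SA.A => (2 : ℂ)⁻¹ • (1 - Fsw d)

/-- `E_i ⊗ E_j` on `H = (ℂ^d)^{⊗4}`. -/
noncomputable def EE (d : ℕ) (i j : SA) : Op d 2 := (Esm d i) ⊗ₖ (Esm d j)

/-- `E_i ⊗ 1` on `H = (ℂ^d)^{⊗4}`. -/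
noncomputable def EId (d : ℕ) (i : SA) : Op d 2 :=
  (Esm d i) ⊗ₖ (1 : Matrix (Conf d 2) (Conf d 2) ℂ)

/-- Multiplicities `m_S = d(d+1)/2`, `m_A = d(d-1)/2` (real valued). -/
noncomputable def mR (d : ℕ) : SA → ℝ
  | SA.S => (d : ℝ) * ((d : ℝ) + 1) / 2
  | SA.A => (d : ℝ) * ((d : ℝ) - 1) / 2

/-- Multiplicities `m_S = d(d+1)/2`, `m_A = d(d-1)/2` (complex valued). -/
noncomputable def mC (d : ℕ) : SA → ℂ
  | SA.S => (d : ℂ) * ((d : ℂ) + 1) / 2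
  | SA.A => (d : ℂ) * ((d : ℂ) - 1) / 2

/-- `V^(1) = d • P⁺_{2,2'}` for `p = 2`. -/
noncomputable def V1 (d : ℕ) : Op d 2 := arc d 2 1 1

/-- `V^(2) = d² • P⁺_{2,2'} P⁺_{1,1'}` for `p = 2`. -/
noncomputable def V2 (d : ℕ) : Op d 2 := arc d 2 1 1 * arc d 2 0 0

/-- `Q^(2) = d^{-2} V^(2)` for `p = 2`. -/
noncomputable def Q2 (d : ℕ) : Op d 2 := ((d : ℂ) ^ 2)⁻¹ • V2 d

/-- `Q^(1) = d^{-1} V^(1) - d^{-2} V^(2)` for `p = 2`. -/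
noncomputable def Q1 (d : ℕ) : Op d 2 :=
  (d : ℂ)⁻¹ • V1 d - ((d : ℂ) ^ 2)⁻¹ • V2 d

/-- `G^(2)_{kl} = (d²/√(m_k m_l)) (E_k ⊗ 1) Q^(2) (E_l ⊗ 1)`. -/
noncomputable def G2 (d : ℕ) (k l : SA) : Op d 2 :=
  ((d : ℂ) ^ 2 / ((Real.sqrt (mR d k * mR d l) : ℝ) : ℂ)) • (EId d k * Q2 d * EId d l)

/-- `G^(2) = G^(2)_{SS} + G^(2)_{AA}`. -/
noncomputable def G2sum (d : ℕ) : Op d 2 := G2 d SA.S SA.S + G2 d SA.A SA.A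

/-- The Gram coefficients `b_{SS} = (d+2)/(4d)`, `b_{SA} = b_{AS} = 1/4`,
`b_{AA} = (d-2)/(4d)`. -/
noncomputable def bc (d : ℕ) : SA → SA → ℂ
  | SA.S, SA.S => ((d : ℂ) + 2) / (4 * (d : ℂ))
  | SA.S, SA.A => 1 / 4
  | SA.A, SA.S => 1 / 4
  | SA.A, SA.A => ((d : ℂ) - 2) / (4 * (d : ℂ))

/-- `Ĝ^(1)_{[ij][kl]} = (E_i ⊗ E_j) Q^(1) (E_k ⊗ E_l)`. -/
noncomputable def Ghat1 (d : ℕ) (i j k l : SA) : Op d 2 :=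
  EE d i j * Q1 d * EE d k l

/-- `G^(1)_{[ij][kl]} = b_{ij}⁻¹ Ĝ^(1)_{[ij][kl]}`. -/
noncomputable def G1 (d : ℕ) (i j k l : SA) : Op d 2 := (bc d i j)⁻¹ • Ghat1 d i j k l

/-- `G^(1) = Σ_{ij} G^(1)_{[ij][ij]}`. -/
noncomputable def G1sum (d : ℕ) : Op d 2 := ∑ i : SA, ∑ j : SA, G1 d i j i j

/-- `G^(0)_{ij} = E_i⊗E_j - b_{ij}⁻¹ (E_i⊗E_j)Q^(1)(E_i⊗E_j)
- δ_{ij} (d²/m_i) (E_i⊗1)Q^(2)(E_i⊗1)`. -/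
noncomputable def G0 (d : ℕ) (i j : SA) : Op d 2 :=
  EE d i j - (bc d i j)⁻¹ • (EE d i j * Q1 d * EE d i j) -
    (if i = j then (d : ℂ) ^ 2 / mC d i else 0) • (EId d i * Q2 d * EId d i)

/-!
Tracing an element of `span{V_σ}` over all unprimed systems except `a` leaves a multiple of the
identity on `ℂ^d`. For a single permutation operator the off-diagonal entries vanish, since
configurations `x = y ∘ σ⁻¹` that differ only at `a` must agree there (follow the `σ`-orbit of
`a`), and the diagonal entries agree after relabelling the local basis. As `d • P⁺_{a,a'}` only
couples `a` with `a'`, `Tr (d P⁺ (E ⊗ F)) = Tr (ēᵀ f̄)` for the reduced operators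
`ē = c_E • 1`, `f̄ = c_F • 1`, which is `d c_E c_F = d⁻¹ Tr E Tr F`. Finally
`Tr E_ij = Tr (E_ij E_jj) = Tr (E_jj E_ij) = δ_ij Tr E_jj`.
-/

end WBA

namespace Matrix

variable {R m n n' : Type*} [CommSemiring R]

def partialTraceRight [Fintype n] : Matrix (m × n) (m × n) R →ₗ[R] Matrix m m R where
  toFun M := of fun i j => ∑ k, M (i, k) (j, k)
  map_add' M N := by ext; simp [Finset.sum_add_distrib]
  map_smul' c M := by ext; simp [Finset.mul_sum]

theorem partialTraceRight_apply [Fintype n] (M : Matrix (m × n) (m × n) R) (i j : m) :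
    partialTraceRight M i j = ∑ k, M (i, k) (j, k) := rfl

theorem trace_partialTraceRight [Fintype m] [Fintype n] (M : Matrix (m × n) (m × n) R) :
    trace (partialTraceRight M) = trace M := by
  simp [trace, partialTraceRight_apply, Fintype.sum_prod_type]

theorem trace_reindex {m' : Type*} [Fintype m] [Fintype m'] (e : m ≃ m') (M : Matrix m m R) :
    trace (reindex e e M) = trace M := by
  simp only [trace, diag, reindex_apply, submatrix_apply]
  exact e.symm.sum_comp (fun i => M i i)

/-- `A` is the unnormalised projector onto `∑ s, |s⟩|s⟩` on the two `m`-factors, tensored with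
the identity on the `n`- and `n'`-factors. -/
theorem trace_mul_kronecker_eq_trace_partialTraceRight [Fintype m] [DecidableEq m] [Fintype n]
    [DecidableEq n] [Fintype n'] [DecidableEq n']
    {A : Matrix ((m × n) × (m × n')) ((m × n) × (m × n')) R}
    (hA : ∀ x y u v, A (x, y) (u, v) =
      if x.1 = y.1 ∧ u.1 = v.1 ∧ x.2 = u.2 ∧ y.2 = v.2 then 1 else 0)
    (E : Matrix (m × n) (m × n) R) (F : Matrix (m × n') (m × n') R) :
    trace (A * (E ⊗ₖ F)) = trace ((partialTraceRight E)ᵀ * partialTraceRight F) := by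
  simp only [trace, diag, mul_apply, kroneckerMap_apply, Fintype.sum_prod_type, hA,
    partialTraceRight_apply, transpose_apply, ite_and, ite_mul, one_mul, zero_mul,
    Finset.sum_mul_sum]
  simp only [Finset.sum_ite_irrel, Finset.sum_const_zero, Finset.sum_ite_eq, Finset.mem_univ,
    if_true]
  refine Finset.sum_congr rfl fun j _ => ?_
  calc _ = ∑ i₁, ∑ i, ∑ j₁, E (i, i₁) (j, i₁) * F (i, j₁) (j, j₁) :=
        Finset.sum_congr rfl fun _ _ => Finset.sum_comm
    _ = _ := Finset.sum_comm

theorem mem_span_singleton_one_of_apply {M : Matrix m m R} [DecidableEq m]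
    (hoff : ∀ i j, i ≠ j → M i j = 0) (hdiag : ∀ i j, M i i = M j j) :
    M ∈ R ∙ (1 : Matrix m m R) := by
  rcases isEmpty_or_nonempty m with hm | ⟨⟨i₀⟩⟩
  · simp [Subsingleton.elim M 0]
  · refine Submodule.mem_span_singleton.2 ⟨M i₀ i₀, ?_⟩
    ext i j
    by_cases h : i = j
    · subst h; simp [hdiag i i₀]
    · simp [h, hoff i j h]

theorem trace_eq_ite_of_mul_eq_ite {ι : Type*} [DecidableEq ι] [Fintype n]
    {E : ι → ι → Matrix n n R} (hE : ∀ i j k l, E i j * E k l = if j = k then E i l else 0)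
    (i j : ι) : trace (E i j) = if i = j then trace (E j j) else 0 := by
  split_ifs with h
  · rw [h]
  · have hEij : E i j = E i j * E j j := by rw [hE, if_pos rfl]
    rw [hEij, trace_mul_comm, hE, if_neg (Ne.symm h), trace_zero]

end Matrix

namespace Equiv

section FunSplitAt

variable {α β : Type*} [DecidableEq α] (a : α)

theorem funSplitAt_symm_apply_self (X : β × ({j // j ≠ a} → β)) :
    (funSplitAt a β).symm X a = X.1 := by
  simp [funSplitAt]

theorem funSplitAt_symm_eqOn_compl_iff (X U : β × ({j // j ≠ a} → β)) :
    (∀ j, j ≠ a → (funSplitAt a β).symm X j = (funSplitAt a β).symm U j) ↔ X.2 = U.2 := by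
  simp +contextual [funSplitAt, funext_iff]

theorem funSplitAt_symm_map {γ : Type*} (g : β → γ) (s : β) (r : {j // j ≠ a} → β) :
    (funSplitAt a γ).symm (g s, g ∘ r) = g ∘ (funSplitAt a β).symm (s, r) := by
  funext j
  by_cases h : j = a
  · subst h; simp [funSplitAt]
  · simp [funSplitAt, h]

end FunSplitAt

theorem Perm.apply_eq_of_apply_perm_eq {α β : Type*} [Finite α] {σ : Perm α}
    {x y : α → β} {a : α} (hσ : ∀ j, x (σ j) = y j) (hxy : ∀ j, j ≠ a → x j = y j) :
    x a = y a := by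
  have orbit : ∀ k : ℕ, x ((σ ^ (k + 1)) a) = y a := by
    intro k
    induction k with
    | zero => simpa using hσ a
    | succ k ih =>
      rw [pow_succ', Perm.mul_apply, hσ]
      by_cases h : (σ ^ (k + 1)) a = a
      · rw [h]
      · rw [← hxy _ h, ih]
  obtain ⟨k, hk⟩ : ∃ k, orderOf σ = k + 1 := Nat.exists_eq_add_one.2 (orderOf_pos σ)
  simpa [← hk, pow_orderOf_eq_one] using orbit k

end Equiv

namespace WBA

variable {d p : ℕ}

noncomputable def partialTraceExcept (a : Fin p) :
    Matrix (Conf d p) (Conf d p) ℂ →ₗ[ℂ] Matrix (Fin d) (Fin d) ℂ :=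
  Matrix.partialTraceRight ∘ₗ
    (Matrix.reindexLinearEquiv ℂ ℂ (Equiv.funSplitAt a (Fin d))
      (Equiv.funSplitAt a (Fin d))).toLinearMap

theorem partialTraceExcept_apply (a : Fin p) (M : Matrix (Conf d p) (Conf d p) ℂ) (s t : Fin d) :
    partialTraceExcept a M s t = ∑ r, M ((Equiv.funSplitAt a (Fin d)).symm (s, r))
      ((Equiv.funSplitAt a (Fin d)).symm (t, r)) := rfl

theorem trace_partialTraceExcept (a : Fin p) (M : Matrix (Conf d p) (Conf d p) ℂ) :
    Matrix.trace (partialTraceExcept a M) = Matrix.trace M :=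
  (Matrix.trace_partialTraceRight _).trans (Matrix.trace_reindex _ M)

theorem arc_self_apply (a : Fin p) (x y u v : Conf d p) :
    arc d p a a (x, y) (u, v) =
      if x a = y a ∧ u a = v a ∧ (∀ j, j ≠ a → x j = u j) ∧ (∀ j, j ≠ a → y j = v j) then 1
      else 0 := by
  have hd : (d : ℂ) ≠ 0 := Nat.cast_ne_zero.2 (Fin.pos (x a)).ne'
  simp only [arc, Pplus, Matrix.smul_apply, Matrix.of_apply, smul_eq_mul, mul_ite, mul_zero,
    mul_inv_cancel₀ hd]

theorem arc_self_reindex_apply (a : Fin p) (X Y U V : Fin d × ({j // j ≠ a} → Fin d)) :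
    Matrix.reindex ((Equiv.funSplitAt a (Fin d)).prodCongr (Equiv.funSplitAt a (Fin d)))
      ((Equiv.funSplitAt a (Fin d)).prodCongr (Equiv.funSplitAt a (Fin d))) (arc d p a a)
      (X, Y) (U, V) =
      if X.1 = Y.1 ∧ U.1 = V.1 ∧ X.2 = U.2 ∧ Y.2 = V.2 then 1 else 0 := by
  simp only [Matrix.reindex_apply, Matrix.submatrix_apply, Equiv.prodCongr_symm,
    Equiv.prodCongr_apply, Prod.map, arc_self_apply, Equiv.funSplitAt_symm_apply_self,
    Equiv.funSplitAt_symm_eqOn_compl_iff]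

theorem trace_arc_self_mul_kronecker (a : Fin p) (E F : Matrix (Conf d p) (Conf d p) ℂ) :
    Matrix.trace (arc d p a a * (E ⊗ₖ F)) =
      Matrix.trace ((partialTraceExcept a E)ᵀ * partialTraceExcept a F) := by
  set e := Equiv.funSplitAt a (Fin d)
  have hmul : Matrix.reindex (e.prodCongr e) (e.prodCongr e) (arc d p a a * (E ⊗ₖ F)) =
      Matrix.reindex (e.prodCongr e) (e.prodCongr e) (arc d p a a) *
        (Matrix.reindex e e E ⊗ₖ Matrix.reindex e e F) := by
    rw [Matrix.kroneckerMap_reindex]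
    exact (Matrix.submatrix_mul_equiv _ _ _ _ _).symm
  rw [← Matrix.trace_reindex (e.prodCongr e), hmul]
  exact Matrix.trace_mul_kronecker_eq_trace_partialTraceRight (arc_self_reindex_apply a) _ _

theorem permMat_comp_left {n : ℕ} (σ : Equiv.Perm (Fin n)) (g : Equiv.Perm (Fin d))
    (x u : Fin n → Fin d) : permMat d n σ (g ∘ x) (g ∘ u) = permMat d n σ x u := by
  simp only [permMat, Matrix.of_apply, Function.comp_assoc, g.injective.comp_left.eq_iff]

theorem partialTraceExcept_permMat_apply_of_ne (a : Fin p) (σ : Equiv.Perm (Fin p))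
    {s t : Fin d} (hst : s ≠ t) : partialTraceExcept a (permMat d p σ) s t = 0 := by
  refine Finset.sum_eq_zero fun r _ => if_neg fun h => hst ?_
  simpa only [Equiv.funSplitAt_symm_apply_self] using
    Equiv.Perm.apply_eq_of_apply_perm_eq (σ := σ) (a := a)
      (fun j => by simpa using congrFun h (σ j))
      ((Equiv.funSplitAt_symm_eqOn_compl_iff a (s, r) (t, r)).2 rfl)

theorem partialTraceExcept_permMat_apply_perm (a : Fin p) (σ : Equiv.Perm (Fin p))
    (g : Equiv.Perm (Fin d)) (s t : Fin d) :
    partialTraceExcept a (permMat d p σ) (g s) (g t) =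
      partialTraceExcept a (permMat d p σ) s t := by
  simp only [partialTraceExcept_apply]
  refine (Fintype.sum_equiv ((Equiv.refl _).arrowCongr g) _ _ fun r => ?_).symm
  change _ = permMat d p σ ((Equiv.funSplitAt a (Fin d)).symm (g s, g ∘ r))
    ((Equiv.funSplitAt a (Fin d)).symm (g t, g ∘ r))
  simp only [Equiv.funSplitAt_symm_map, permMat_comp_left]

theorem partialTraceExcept_permMat_mem_span_one (a : Fin p) (σ : Equiv.Perm (Fin p)) :
    partialTraceExcept a (permMat d p σ) ∈ ℂ ∙ (1 : Matrix (Fin d) (Fin d) ℂ) :=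
  Matrix.mem_span_singleton_one_of_apply (fun _ _ => partialTraceExcept_permMat_apply_of_ne a σ)
    fun s t => by simpa using partialTraceExcept_permMat_apply_perm a σ (Equiv.swap s t) t t

theorem partialTraceExcept_mem_span_one_of_mem_span_permMat (a : Fin p)
    {M : Matrix (Conf d p) (Conf d p) ℂ}
    (hM : M ∈ Submodule.span ℂ {M | ∃ σ : Equiv.Perm (Fin p), M = permMat d p σ}) :
    partialTraceExcept a M ∈ ℂ ∙ (1 : Matrix (Fin d) (Fin d) ℂ) := by
  refine (Submodule.span_le
    (p := (ℂ ∙ (1 : Matrix (Fin d) (Fin d) ℂ)).comap (partialTraceExcept a))).2 ?_ hM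
  rintro _ ⟨σ, rfl⟩
  exact partialTraceExcept_permMat_mem_span_one a σ

theorem trace_arc_self_mul_kronecker_of_mem_span (a : Fin p)
    {E F : Matrix (Conf d p) (Conf d p) ℂ}
    (hE : E ∈ Submodule.span ℂ {M | ∃ σ : Equiv.Perm (Fin p), M = permMat d p σ})
    (hF : F ∈ Submodule.span ℂ {M | ∃ σ : Equiv.Perm (Fin p), M = permMat d p σ}) :
    Matrix.trace (arc d p a a * (E ⊗ₖ F)) = (d : ℂ)⁻¹ * Matrix.trace E * Matrix.trace F := by
  obtain ⟨cE, hcE⟩ :=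
    Submodule.mem_span_singleton.1 (partialTraceExcept_mem_span_one_of_mem_span_permMat a hE)
  obtain ⟨cF, hcF⟩ :=
    Submodule.mem_span_singleton.1 (partialTraceExcept_mem_span_one_of_mem_span_permMat a hF)
  rw [trace_arc_self_mul_kronecker, ← trace_partialTraceExcept a E,
    ← trace_partialTraceExcept a F, ← hcE, ← hcF]
  simp only [Matrix.transpose_smul, Matrix.transpose_one, Matrix.mul_smul,
    mul_one, Matrix.trace_smul, Matrix.trace_one, Fintype.card_fin, smul_eq_mul]
  linear_combination -(cE * cF) * inv_mul_mul_self (d : ℂ)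

theorem trace_arc_matrix_units_general (d p : ℕ)
    (lastI : Fin p)
    (n m : ℕ)
    (E : Fin n → Fin n → Matrix (Conf d p) (Conf d p) ℂ)
    (F : Fin m → Fin m → Matrix (Conf d p) (Conf d p) ℂ)
    (hE : ∀ i j, E i j ∈
      Submodule.span ℂ {M | ∃ σ : Equiv.Perm (Fin p), M = permMat d p σ})
    (hF : ∀ i j, F i j ∈
      Submodule.span ℂ {M | ∃ τ : Equiv.Perm (Fin p), M = permMat d p τ})
    (hEmul : ∀ i j k l, E i j * E k l = if j = k then E i l else 0)
    (hFmul : ∀ i j k l, F i j * F k l = if j = k then F i l else 0)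
    (i j : Fin n) (k l : Fin m) :
    Matrix.trace (arc d p lastI lastI * (E i j ⊗ₖ F k l)) =
      (if i = j then 1 else 0) * (if k = l then 1 else 0) * (d : ℂ)⁻¹ *
        Matrix.trace (E j j) * Matrix.trace (F l l) := by
  rw [trace_arc_self_mul_kronecker_of_mem_span lastI (hE i j) (hF k l),
    Matrix.trace_eq_ite_of_mul_eq_ite hEmul, Matrix.trace_eq_ite_of_mul_eq_ite hFmul]
  split_ifs <;> ring

/-- if `{E_{ij}}` is a family of matrix units inside `span{V_σ : σ ∈ S_p}`
(acting on the unprimed factors) and `{F_{kl}}` is a family of matrix units inside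
`span{V'_τ : τ ∈ S_p}` (acting on the primed factors), then
`Tr((d P⁺_{p,p'}) E_{ij} F_{kl}) = δ_{ij} δ_{kl} (1/d) Tr(E_{jj}) Tr(F_{ll})`. -/
theorem trace_arc_matrix_units (d p : ℕ) (hd : 2 ≤ d) (hp : 1 ≤ p)
    (lastI : Fin p) (hlast : (lastI : ℕ) = p - 1)
    (n m : ℕ)
    (E : Fin n → Fin n → Matrix (Conf d p) (Conf d p) ℂ)
    (F : Fin m → Fin m → Matrix (Conf d p) (Conf d p) ℂ)
    (hE : ∀ i j, E i j ∈
      Submodule.span ℂ {M | ∃ σ : Equiv.Perm (Fin p), M = permMat d p σ})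
    (hF : ∀ i j, F i j ∈
      Submodule.span ℂ {M | ∃ τ : Equiv.Perm (Fin p), M = permMat d p τ})
    (hEmul : ∀ i j k l, E i j * E k l = if j = k then E i l else 0)
    (hFmul : ∀ i j k l, F i j * F k l = if j = k then F i l else 0)
    (i j : Fin n) (k l : Fin m) :
    Matrix.trace (arc d p lastI lastI * (E i j ⊗ₖ F k l)) =
      (if i = j then 1 else 0) * (if k = l then 1 else 0) * (d : ℂ)⁻¹ *
        Matrix.trace (E j j) * Matrix.trace (F l l) :=
  trace_arc_matrix_units_general d p lastI n m E F hE hF hEmul hFmul i j k l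

end WBA
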